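/- arXiv:0910.3173 — 5 statements merged into one kernel-verified Lean document; each statement's English description precedes it below -/
import Mathlib

section
/- (Lemma 6.1: averages of the Baxter coefficients.) Define the scalar 2×2 matrix product P(Λ) = 𝓛_N(Λ)·𝓛_{N−1}(Λ)···𝓛_1(Λ). Then for every λ ∈ ℂ∖{0}, with Λ = λ^p: ∏_{k=1}^{p} a_N(q^k λ) = P(Λ)_{11} − P(Λ)_{12} and ∏_{k=1}^{p} d_N(q^k λ) = P(Λ)_{11} + P(Λ)_{12}. -/
open scoped BigOperators Matrix

noncomputable section

namespace SG

/-- Index set for the Hilbert space `H`: tuples in `(S_p)^N`, with a `p`-th root of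
unity `z = q^m` encoded by its exponent `m : ZMod p`, `p = 2*l+1`. -/
abbrev Idx (l N : ℕ) := Fin N → ZMod (2*l+1)

/-- `q` raised to the power of an element of `ZMod (2*l+1)`. -/
def Qp (l : ℕ) (q : ℂ) (j : ZMod (2*l+1)) : ℂ := q ^ j.val

/-- The value `w_lam(q^(2n))` given by the defining product formula. -/
def wAux (l : ℕ) (q lam : ℂ) (n : ℕ) : ℂ :=
  (∏ r ∈ Finset.range n, (1 + lam * q ^ (2*r+1)) / (lam + q ^ (2*r+1))) *
    ∏ r ∈ Finset.range l, (lam + q ^ (2*r+1)) / (1 + q ^ (2*r+1))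

/-- `w lam m` is the value `w_lam(q^m)`; since `p` is odd, `q^m = q^(2n)` with
`n = (l+1)*m mod p`. -/
def w (l : ℕ) (q lam : ℂ) (m : ZMod (2*l+1)) : ℂ :=
  wAux l q lam (((l : ZMod (2*l+1)) + 1) * m).val

/-- The discrete Fourier transform `w̄_lam(q^m) = (1/p) ∑_k (q^m)^k w_lam(q^k)`. -/
def wbar (l : ℕ) (q lam : ℂ) (m : ZMod (2*l+1)) : ℂ :=
  (1 / (2*(l : ℂ)+1)) * ∑ k : ZMod (2*l+1), Qp l q (m * k) * w l q lam k

/-- Regularity: `mu` avoids the poles `{-q^(2r-1)}` of `w_mu` and `w̄_mu`. -/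
def Reg (q mu : ℂ) : Prop := ∀ r : ℕ, mu + q ^ (2*r+1) ≠ 0

/-- `ε = -i q^(-1/2)` with `q^(1/2) := q^(l+1)`. -/
def eps (l : ℕ) (q : ℂ) : ℂ := -Complex.I * (q ^ (l+1))⁻¹

/-- The operator `u_n` (with classical parameter `u n`), acting as multiplication
by `u n * z_n`. -/
def uop (l : ℕ) {N : ℕ} (q : ℂ) (u : Fin N → ℂ) (n : Fin N) :
    Matrix (Idx l N) (Idx l N) ℂ :=
  Matrix.diagonal fun k => u n * Qp l q (k n)

/-- The inverse of `u_n`. -/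
def uopInv (l : ℕ) {N : ℕ} (q : ℂ) (u : Fin N → ℂ) (n : Fin N) :
    Matrix (Idx l N) (Idx l N) ℂ :=
  Matrix.diagonal fun k => (u n)⁻¹ * Qp l q (-(k n))

/-- The operator `v_n` (with classical parameter `v n`): `(v_n ψ)(z) = v n * ψ(..., q⁻¹ z_n, ...)`. -/
def vop (l : ℕ) {N : ℕ} (v : Fin N → ℂ) (n : Fin N) :
    Matrix (Idx l N) (Idx l N) ℂ :=
  fun k k' => if k' = Function.update k n (k n - 1) then v n else 0

/-- The inverse of `v_n`. -/
def vopInv (l : ℕ) {N : ℕ} (v : Fin N → ℂ) (n : Fin N) :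
    Matrix (Idx l N) (Idx l N) ℂ :=
  fun k k' => if k' = Function.update k n (k n + 1) then (v n)⁻¹ else 0

/-- The Lax matrix `L_n(lam)` of the lattice Sine-Gordon model, a `2×2` matrix with
operator entries. -/
def Lax (l : ℕ) {N : ℕ} (q : ℂ) (κ ξ u v : Fin N → ℂ) (lam : ℂ) (n : Fin N) :
    Matrix (Fin 2) (Fin 2) (Matrix (Idx l N) (Idx l N) ℂ) :=
  (κ n / Complex.I) • !![
    Complex.I • (uop l q u n *
      (((q ^ (l+1))⁻¹ * κ n) • vop l v n + (q ^ (l+1) * (κ n)⁻¹) • vopInv l v n)),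
    (lam / ξ n) • vop l v n - (lam / ξ n)⁻¹ • vopInv l v n ;
    (lam / ξ n) • vopInv l v n - (lam / ξ n)⁻¹ • vop l v n,
    Complex.I • (uopInv l q u n *
      ((q ^ (l+1) * (κ n)⁻¹) • vop l v n + ((q ^ (l+1))⁻¹ * κ n) • vopInv l v n))]

/-- The monodromy matrix `M(lam) = L_N(lam) ⋯ L_1(lam)`. -/
def Mon (l : ℕ) {N : ℕ} (q : ℂ) (κ ξ u v : Fin N → ℂ) (lam : ℂ) :
    Matrix (Fin 2) (Fin 2) (Matrix (Idx l N) (Idx l N) ℂ) :=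
  ((List.ofFn fun n : Fin N => Lax l q κ ξ u v lam n).reverse).prod

/-- The transfer matrix `T(lam) = A(lam) + D(lam)`. -/
def Top (l : ℕ) {N : ℕ} (q : ℂ) (κ ξ u v : Fin N → ℂ) (lam : ℂ) :
    Matrix (Idx l N) (Idx l N) ℂ :=
  Mon l q κ ξ u v lam 0 0 + Mon l q κ ξ u v lam 1 1

/-- The operator `Y(lam)`, defined by its matrix elements. -/
def Yop (l : ℕ) {N : ℕ} [NeZero N] (q : ℂ) (κ ξ : Fin N → ℂ) (lam : ℂ) :
    Matrix (Idx l N) (Idx l N) ℂ :=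
  fun k k' => ∏ n : Fin N,
    wbar l q (eps l q * lam / (κ n * ξ n)) (k n - k' n) *
      w l q (eps l q * lam * κ n / ξ n) (k n + k' (n + 1))

/-- Regularity of all the `w`- and `w̄`-factors defining `Y(lam)`. -/
def RegY (l : ℕ) {N : ℕ} (q : ℂ) (κ ξ : Fin N → ℂ) (lam : ℂ) : Prop :=
  ∀ n : Fin N, Reg q (eps l q * lam / (κ n * ξ n)) ∧ Reg q (eps l q * lam * κ n / ξ n)

/-- The Baxter Q-operator `Q(lam, mu) = Y(lam) · Y(conj mu)†`. -/
def Qop (l : ℕ) {N : ℕ} [NeZero N] (q : ℂ) (κ ξ : Fin N → ℂ) (lam mu : ℂ) :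
    Matrix (Idx l N) (Idx l N) ℂ :=
  Yop l q κ ξ lam * (Yop l q κ ξ (starRingEnd ℂ mu))ᴴ

/-- The coefficient function `a_N(lam)` of the Baxter equation. -/
def aN (l : ℕ) {N : ℕ} (q : ℂ) (κ ξ : Fin N → ℂ) (lam : ℂ) : ℂ :=
  (-Complex.I) ^ N * ∏ r : Fin N,
    κ r / (lam / ξ r) * (1 + Complex.I * (q ^ (l+1))⁻¹ * (lam / ξ r) * κ r) *
      (1 + Complex.I * (q ^ (l+1))⁻¹ * (lam / ξ r) / κ r)

/-- The coefficient function `d_N(lam)` of the Baxter equation. -/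
def dN (l : ℕ) {N : ℕ} (q : ℂ) (κ ξ : Fin N → ℂ) (lam : ℂ) : ℂ :=
  Complex.I ^ N * ∏ r : Fin N,
    κ r / (lam / ξ r) * (1 - Complex.I * q ^ (l+1) * (lam / ξ r) * κ r) *
      (1 - Complex.I * q ^ (l+1) * (lam / ξ r) / κ r)

/-- The Θ-charge `Θ = ∏_{n=1}^N v_n^((-1)^(1+n)) = v_1 v_2⁻¹ v_3 v_4⁻¹ ⋯` (unit parameters). -/
def Theta (l : ℕ) {N : ℕ} : Matrix (Idx l N) (Idx l N) ℂ :=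
  (List.ofFn fun n : Fin N =>
    if Even (n : ℕ) then vop l (fun _ : Fin N => (1:ℂ)) n
    else vopInv l (fun _ : Fin N => (1:ℂ)) n).prod

/-- The scalar auxiliary R-matrix on `ℂ² ⊗ ℂ²`. -/
def Rmat (q lam : ℂ) : Matrix (Fin 2 × Fin 2) (Fin 2 × Fin 2) ℂ :=
  fun a b =>
    if a = b then (if a.1 = a.2 then q * lam - q⁻¹ * lam⁻¹ else lam - lam⁻¹)
    else if a.1 = b.2 ∧ a.2 = b.1 then q - q⁻¹ else 0

/-- The R-matrix with entries viewed as scalar multiples of the identity operator on `H`. -/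
def Rop (l N : ℕ) (q lam : ℂ) :
    Matrix (Fin 2 × Fin 2) (Fin 2 × Fin 2) (Matrix (Idx l N) (Idx l N) ℂ) :=
  (Rmat q lam).map fun c => c • (1 : Matrix (Idx l N) (Idx l N) ℂ)

/-- The classical (average) Lax matrix `𝓛_n(Λ)`, a scalar 2×2 matrix, built from
`K_n = κ_n^p`, `X_n = ξ_n^p`, `U_n = u_n^p`, `V_n = v_n^p`. -/
def Lcl (l : ℕ) {N : ℕ} (κ ξ u v : Fin N → ℂ) (L : ℂ) (n : Fin N) :
    Matrix (Fin 2) (Fin 2) ℂ :=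
  (1 / Complex.I ^ (2*l+1)) • !![
    Complex.I ^ (2*l+1) * (u n) ^ (2*l+1) *
      (((κ n) ^ (2*l+1)) ^ 2 * (v n) ^ (2*l+1) + ((v n) ^ (2*l+1))⁻¹),
    (κ n) ^ (2*l+1) * (L * (v n) ^ (2*l+1) / (ξ n) ^ (2*l+1)
      - (ξ n) ^ (2*l+1) / ((v n) ^ (2*l+1) * L)) ;
    (κ n) ^ (2*l+1) * (L / ((ξ n) ^ (2*l+1) * (v n) ^ (2*l+1))
      - (ξ n) ^ (2*l+1) * (v n) ^ (2*l+1) / L),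
    Complex.I ^ (2*l+1) * ((u n) ^ (2*l+1))⁻¹ *
      (((κ n) ^ (2*l+1)) ^ 2 * ((v n) ^ (2*l+1))⁻¹ + (v n) ^ (2*l+1))]

/-- The product `𝓛_N(Λ) 𝓛_{N-1}(Λ) ⋯ 𝓛_1(Λ)` of the classical Lax matrices. -/
def LclProd (l : ℕ) {N : ℕ} (κ ξ u v : Fin N → ℂ) (L : ℂ) : Matrix (Fin 2) (Fin 2) ℂ :=
  ((List.ofFn fun n : Fin N => Lcl l κ ξ u v L n).reverse).prod

/-- The average `𝒪(Λ) = ∏_{k=1}^{p} O(q^k λ)` of the monodromy matrix entry `M(·) i j`. -/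
def avgEntry (l : ℕ) {N : ℕ} (q : ℂ) (κ ξ u v : Fin N → ℂ) (i j : Fin 2) (lam : ℂ) :
    Matrix (Idx l N) (Idx l N) ℂ :=
  (List.ofFn fun k : Fin (2*l+1) => Mon l q κ ξ u v (q ^ ((k : ℕ) + 1) * lam) i j).prod

/-- The kernel matrix `Y_0`, `(Y_0)_{k,k'} = ∏_n q^(-2 k_n (k'_n + k'_{n+1}))`. -/
def Y0mat (l : ℕ) {N : ℕ} [NeZero N] (q : ℂ) : Matrix (Idx l N) (Idx l N) ℂ :=
  fun k k' => ∏ n : Fin N, Qp l q (-(2 * k n * (k' n + k' (n + 1))))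

/-- The kernel matrix `Y_∞`, `(Y_∞)_{k,k'} = ∏_n q^(+2 k_n (k'_n + k'_{n+1}))`. -/
def Yinfmat (l : ℕ) {N : ℕ} [NeZero N] (q : ℂ) : Matrix (Idx l N) (Idx l N) ℂ :=
  fun k k' => ∏ n : Fin N, Qp l q (2 * k n * (k' n + k' (n + 1)))

end SG


open SG

open Polynomial in
private lemma prod_sub_pow {n : ℕ} (hn : 0 < n) {q : ℂ} (hq : IsPrimitiveRoot q n) (x y : ℂ) :
    ∏ k ∈ Finset.range n, (x - q ^ k * y) = x ^ n - y ^ n := by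
  have : NeZero n := ⟨hn.ne'⟩
  rw [hq.pow_sub_pow_eq_prod_sub_mul x y hn]
  refine Finset.prod_nbij (fun k => q ^ k) ?_ ?_ ?_ ?_
  · intro k _
    rw [Polynomial.mem_nthRootsFinset hn, ← pow_mul, mul_comm, pow_mul, hq.pow_eq_one, one_pow]
  · intro i hi j hj h
    exact hq.pow_inj (Finset.mem_range.1 hi) (Finset.mem_range.1 hj) h
  · intro ζ hζ
    obtain ⟨i, hik, rfl⟩ := hq.eq_pow_of_pow_eq_one
      ((Polynomial.mem_nthRootsFinset hn 1).1 hζ)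
    exact ⟨i, Finset.mem_coe.2 (Finset.mem_range.2 hik), rfl⟩
  · intro k _; rfl

private lemma prod_one_add {l : ℕ} {q : ℂ} (hq : IsPrimitiveRoot q (2*l+1)) (c : ℂ) :
    ∏ k ∈ Finset.range (2*l+1), (1 + c * q ^ (k+1)) = 1 + c ^ (2*l+1) := by
  have h := prod_sub_pow (by omega) hq 1 (-(c*q))
  calc ∏ k ∈ Finset.range (2*l+1), (1 + c * q ^ (k+1))
      = ∏ k ∈ Finset.range (2*l+1), (1 - q ^ k * (-(c*q))) :=
        Finset.prod_congr rfl fun k _ => by ring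
    _ = 1 ^ (2*l+1) - (-(c*q)) ^ (2*l+1) := h
    _ = 1 + c ^ (2*l+1) := by
        rw [Odd.neg_pow ⟨l, by ring⟩, one_pow, mul_pow, hq.pow_eq_one, mul_one]
        ring

private lemma circ_prod (L : List (ℂ × ℂ)) :
    ∃ c d : ℂ,
      (L.map fun p => (!![p.1, p.2; p.2, p.1] : Matrix (Fin 2) (Fin 2) ℂ)).prod = !![c, d; d, c] ∧
      c + d = (L.map fun p => p.1 + p.2).prod ∧
      c - d = (L.map fun p => p.1 - p.2).prod := by
  induction L with
  | nil => exact ⟨1, 0, by simp [Matrix.one_fin_two], by simp, by simp⟩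
  | cons p L ih =>
    obtain ⟨c, d, hP, hs, ht⟩ := ih
    refine ⟨p.1*c + p.2*d, p.1*d + p.2*c, ?_, ?_, ?_⟩
    · rw [List.map_cons, List.prod_cons, hP, Matrix.mul_fin_two]
      apply Matrix.ext; intro i j; fin_cases i <;> fin_cases j <;> simp <;> ring
    · rw [List.map_cons, List.prod_cons]; linear_combination (p.1+p.2) * hs
    · rw [List.map_cons, List.prod_cons]; linear_combination (p.1-p.2) * ht

private lemma keyA (J K X Λ : ℂ) (hJ2 : J*J = -1) (hJ0 : J ≠ 0) (hK : K ≠ 0) (hX : X ≠ 0)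
    (hΛ : Λ ≠ 0) :
    (-J) * ((K*X/Λ) * (1 + J*(Λ*K/X)) * (1 + J*(Λ/(X*K)))) =
      (1/J)*(J*(K^2+1)) - (1/J)*(K*(Λ/X - X/Λ)) := by
  field_simp
  linear_combination (- J*K*X^3*Λ^2 - J*K^3*X^3*Λ^2 - K^2*X^4*Λ - K^2*X^2*Λ^3*(J^2-1) + ((-X*K^2*Λ - X*Λ + X^3*K*Λ^2 + X^3*K^3*Λ^2)*J + (X^2*K^2*Λ^3 - K*Λ^2)*(J^2-1) + (-X^2*K + X^4*K^2*Λ))) * hJ2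

private lemma keyD (J K X Λ : ℂ) (hJ2 : J*J = -1) (hJ0 : J ≠ 0) (hK : K ≠ 0) (hX : X ≠ 0)
    (hΛ : Λ ≠ 0) :
    J * ((K*X/Λ) * (1 - J*(Λ*K/X)) * (1 - J*(Λ/(X*K)))) =
      (1/J)*(J*(K^2+1)) + (1/J)*(K*(Λ/X - X/Λ)) := by
  field_simp
  linear_combination (- J*K*X^3*Λ^2 - J*K^3*X^3*Λ^2 + K^2*X^4*Λ + K^2*X^2*Λ^3*(J^2-1) + ((-X*K^2*Λ - X*Λ + X^3*K*Λ^2 + X^3*K^3*Λ^2)*J - (X^2*K^2*Λ^3 - K*Λ^2)*(J^2-1) - (-X^2*K + X^4*K^2*Λ))) * hJ2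

set_option maxHeartbeats 1000000 in
/-- **Averages of the Baxter coefficients** (Lemma 6.1): with
`P(Λ) = 𝓛_N(Λ)···𝓛_1(Λ)` (parameters `U_n = V_n = 1`) and `Λ = λ^p`,
`∏_{k=1}^p a_N(q^k λ) = P(Λ)_{11} - P(Λ)_{12}` and
`∏_{k=1}^p d_N(q^k λ) = P(Λ)_{11} + P(Λ)_{12}`. -/
theorem averages_of_baxter_coefficients (l N : ℕ) (hl : 1 ≤ l)
    (q : ℂ) (hq : IsPrimitiveRoot q (2*l+1))
    (κ ξ : Fin N → ℂ) (hκ : ∀ n, κ n ≠ 0) (hξ : ∀ n, ξ n ≠ 0)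
    (lam : ℂ) (hlam : lam ≠ 0) :
    (∏ k ∈ Finset.range (2*l+1), aN l q κ ξ (q ^ (k+1) * lam))
        = LclProd l κ ξ (fun _ => 1) (fun _ => 1) (lam ^ (2*l+1)) 0 0
          - LclProd l κ ξ (fun _ => 1) (fun _ => 1) (lam ^ (2*l+1)) 0 1 ∧
      (∏ k ∈ Finset.range (2*l+1), dN l q κ ξ (q ^ (k+1) * lam))
        = LclProd l κ ξ (fun _ => 1) (fun _ => 1) (lam ^ (2*l+1)) 0 0
          + LclProd l κ ξ (fun _ => 1) (fun _ => 1) (lam ^ (2*l+1)) 0 1 := by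
  have hp : 0 < 2*l+1 := by omega
  have hq1 : q ^ (2*l+1) = 1 := hq.pow_eq_one
  have hq0 : q ≠ 0 := by
    intro h; rw [h, zero_pow hp.ne'] at hq1; exact zero_ne_one hq1
  have hodd : Odd (2*l+1) := ⟨l, by ring⟩
  have hJ2 : Complex.I ^ (2*l+1) * Complex.I ^ (2*l+1) = -1 := by
    rw [← pow_add, show (2*l+1)+(2*l+1) = 2*(2*l+1) by ring, pow_mul, Complex.I_sq]
    exact hodd.neg_one_pow
  have hJ0 : Complex.I ^ (2*l+1) ≠ 0 := pow_ne_zero _ Complex.I_ne_zero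
  have hql : (q ^ (l+1)) ^ (2*l+1) = 1 := by
    rw [← pow_mul, mul_comm, pow_mul, hq1, one_pow]
  have hnegI : (-Complex.I) ^ (2*l+1) = -Complex.I ^ (2*l+1) := hodd.neg_pow _
  have hqprod : ∏ k ∈ Finset.range (2*l+1), q ^ (k+1) = 1 := by
    rw [Finset.prod_pow_eq_pow_sum]
    have h2 := Finset.sum_range_id_mul_two (2*l+1)
    have h3 : ∑ k ∈ Finset.range (2*l+1), (k+1)
        = (∑ k ∈ Finset.range (2*l+1), k) + (2*l+1) := by
      rw [Finset.sum_add_distrib, Finset.sum_const, Finset.card_range, smul_eq_mul, mul_one]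
    have e1 : ∑ k ∈ Finset.range (2*l+1), (k+1) = ∑ k ∈ Finset.range (2*l+2), k := by
      rw [Finset.sum_range_succ' (fun k => k) (2*l+1)]
      simp
    have e3 : (∑ k ∈ Finset.range (2*l+1), (k+1)) * 2 = ((2*l+1)*(l+1)) * 2 := by
      rw [e1, Finset.sum_range_id_mul_two (2*l+2)]
      have h21 : 2*l+2-1 = 2*l+1 := by omega
      rw [h21]; ring
    have h4 : ∑ k ∈ Finset.range (2*l+1), (k+1) = (2*l+1)*(l+1) :=
      Nat.eq_of_mul_eq_mul_right (by norm_num) e3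
    rw [h4, pow_mul, hq1, one_pow]
  -- the circulant decomposition of the classical Lax matrices
  set a : Fin N → ℂ := fun n =>
    (1/Complex.I^(2*l+1)) * (Complex.I^(2*l+1) * ((κ n ^ (2*l+1))^2 + 1)) with ha
  set b : Fin N → ℂ := fun n =>
    (1/Complex.I^(2*l+1)) * (κ n ^ (2*l+1) *
      (lam^(2*l+1) / ξ n ^ (2*l+1) - ξ n ^ (2*l+1) / lam^(2*l+1))) with hb
  have hLcl : ∀ n, Lcl l κ ξ (fun _ => (1:ℂ)) (fun _ => (1:ℂ)) (lam^(2*l+1)) n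
      = !![a n, b n; b n, a n] := by
    intro n
    apply Matrix.ext; intro i j
    fin_cases i <;> fin_cases j <;>
      simp [Lcl, ha, hb, Matrix.smul_apply, smul_eq_mul] <;> ring
  obtain ⟨c, d, hP, hs, ht⟩ := circ_prod ((List.ofFn fun n : Fin N => (a n, b n)).reverse)
  have hmap : (List.ofFn fun n : Fin N =>
        Lcl l κ ξ (fun _ => (1:ℂ)) (fun _ => (1:ℂ)) (lam^(2*l+1)) n).reverse
      = ((List.ofFn fun n : Fin N => (a n, b n)).reverse).map
          (fun p => (!![p.1, p.2; p.2, p.1] : Matrix (Fin 2) (Fin 2) ℂ)) := by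
    rw [List.map_reverse, List.map_ofFn]
    congr 1
    exact congrArg List.ofFn (funext fun n => hLcl n)
  have hLP : LclProd l κ ξ (fun _ => (1:ℂ)) (fun _ => (1:ℂ)) (lam^(2*l+1)) = !![c,d;d,c] := by
    rw [LclProd, hmap, hP]
  have h00 : LclProd l κ ξ (fun _ => (1:ℂ)) (fun _ => (1:ℂ)) (lam^(2*l+1)) 0 0 = c := by
    rw [hLP]; simp
  have h01 : LclProd l κ ξ (fun _ => (1:ℂ)) (fun _ => (1:ℂ)) (lam^(2*l+1)) 0 1 = d := by
    rw [hLP]; simp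
  have hprodlist : ∀ f : (ℂ × ℂ) → ℂ,
      (((List.ofFn fun n : Fin N => (a n, b n)).reverse).map f).prod
        = ∏ n : Fin N, f (a n, b n) := by
    intro f
    rw [List.map_reverse, List.prod_reverse, List.map_ofFn, List.prod_ofFn]
    rfl
  have hs' : c + d = ∏ n : Fin N, (a n + b n) := by rw [hs, hprodlist]
  have ht' : c - d = ∏ n : Fin N, (a n - b n) := by rw [ht, hprodlist]
  constructor
  · -- the a_N case
    have hk1 : ∀ k : ℕ, ∏ r : Fin N, ((-Complex.I) *
        ((κ r * ξ r / lam) * (q^(k+1))⁻¹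
          * (1 + (Complex.I * (q^(l+1))⁻¹ * (lam / ξ r) * κ r) * q^(k+1))
          * (1 + (Complex.I * (q^(l+1))⁻¹ * (lam / ξ r) / κ r) * q^(k+1))))
        = aN l q κ ξ (q^(k+1) * lam) := by
      intro k
      rw [Finset.prod_mul_distrib, Finset.prod_const, Finset.card_univ, Fintype.card_fin]
      simp only [aN]
      congr 1
      refine Finset.prod_congr rfl fun r _ => ?_
      have h1 : ξ r ≠ 0 := hξ r
      have h2 : κ r ≠ 0 := hκ r
      have h3 : q ^ (k+1) ≠ 0 := pow_ne_zero _ hq0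
      field_simp
    have hper : ∀ r : Fin N, ∏ k ∈ Finset.range (2*l+1), ((-Complex.I) *
        ((κ r * ξ r / lam) * (q^(k+1))⁻¹
          * (1 + (Complex.I * (q^(l+1))⁻¹ * (lam / ξ r) * κ r) * q^(k+1))
          * (1 + (Complex.I * (q^(l+1))⁻¹ * (lam / ξ r) / κ r) * q^(k+1))))
        = a r - b r := by
      intro r
      have hc1 : (Complex.I * (q^(l+1))⁻¹ * (lam / ξ r) * κ r)^(2*l+1)
          = Complex.I^(2*l+1) * (lam^(2*l+1) * κ r^(2*l+1) / ξ r^(2*l+1)) := by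
        simp only [mul_pow, div_pow, inv_pow]
        rw [hql, inv_one]
        ring
      have hc2 : (Complex.I * (q^(l+1))⁻¹ * (lam / ξ r) / κ r)^(2*l+1)
          = Complex.I^(2*l+1) * (lam^(2*l+1) / (ξ r^(2*l+1) * κ r^(2*l+1))) := by
        simp only [mul_pow, div_pow, inv_pow]
        rw [hql, inv_one]
        ring
      have hA : (κ r * ξ r / lam)^(2*l+1)
          = κ r^(2*l+1) * ξ r^(2*l+1) / lam^(2*l+1) := by
        rw [div_pow, mul_pow]
      rw [Finset.prod_mul_distrib, Finset.prod_mul_distrib, Finset.prod_mul_distrib,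
        Finset.prod_mul_distrib, Finset.prod_inv_distrib, hqprod, inv_one,
        prod_one_add hq, prod_one_add hq]
      simp only [Finset.prod_const, Finset.card_range]
      rw [hnegI, hA, hc1, hc2]
      have hkey := keyA (Complex.I^(2*l+1)) (κ r^(2*l+1)) (ξ r^(2*l+1)) (lam^(2*l+1))
        hJ2 hJ0 (pow_ne_zero _ (hκ r)) (pow_ne_zero _ (hξ r)) (pow_ne_zero _ hlam)
      rw [ha, hb]
      linear_combination hkey
    calc ∏ k ∈ Finset.range (2*l+1), aN l q κ ξ (q ^ (k+1) * lam)
        = ∏ k ∈ Finset.range (2*l+1), ∏ r : Fin N, ((-Complex.I) *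
            ((κ r * ξ r / lam) * (q^(k+1))⁻¹
              * (1 + (Complex.I * (q^(l+1))⁻¹ * (lam / ξ r) * κ r) * q^(k+1))
              * (1 + (Complex.I * (q^(l+1))⁻¹ * (lam / ξ r) / κ r) * q^(k+1)))) :=
          Finset.prod_congr rfl fun k _ => (hk1 k).symm
      _ = ∏ r : Fin N, ∏ k ∈ Finset.range (2*l+1), ((-Complex.I) *
            ((κ r * ξ r / lam) * (q^(k+1))⁻¹
              * (1 + (Complex.I * (q^(l+1))⁻¹ * (lam / ξ r) * κ r) * q^(k+1))
              * (1 + (Complex.I * (q^(l+1))⁻¹ * (lam / ξ r) / κ r) * q^(k+1)))) :=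
          Finset.prod_comm
      _ = ∏ r : Fin N, (a r - b r) := Finset.prod_congr rfl fun r _ => hper r
      _ = c - d := ht'.symm
      _ = _ := by rw [h00, h01]
  · -- the d_N case
    have hk1 : ∀ k : ℕ, ∏ r : Fin N, (Complex.I *
        ((κ r * ξ r / lam) * (q^(k+1))⁻¹
          * (1 + (-(Complex.I * q^(l+1) * (lam / ξ r) * κ r)) * q^(k+1))
          * (1 + (-(Complex.I * q^(l+1) * (lam / ξ r) / κ r)) * q^(k+1))))
        = dN l q κ ξ (q^(k+1) * lam) := by
      intro k
      rw [Finset.prod_mul_distrib, Finset.prod_const, Finset.card_univ, Fintype.card_fin]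
      simp only [dN]
      congr 1
      refine Finset.prod_congr rfl fun r _ => ?_
      have h1 : ξ r ≠ 0 := hξ r
      have h2 : κ r ≠ 0 := hκ r
      have h3 : q ^ (k+1) ≠ 0 := pow_ne_zero _ hq0
      field_simp
      ring
    have hper : ∀ r : Fin N, ∏ k ∈ Finset.range (2*l+1), (Complex.I *
        ((κ r * ξ r / lam) * (q^(k+1))⁻¹
          * (1 + (-(Complex.I * q^(l+1) * (lam / ξ r) * κ r)) * q^(k+1))
          * (1 + (-(Complex.I * q^(l+1) * (lam / ξ r) / κ r)) * q^(k+1))))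
        = a r + b r := by
      intro r
      have hc1 : (-(Complex.I * q^(l+1) * (lam / ξ r) * κ r))^(2*l+1)
          = -(Complex.I^(2*l+1) * (lam^(2*l+1) * κ r^(2*l+1) / ξ r^(2*l+1))) := by
        rw [hodd.neg_pow]
        simp only [mul_pow, div_pow]
        rw [hql]
        ring
      have hc2 : (-(Complex.I * q^(l+1) * (lam / ξ r) / κ r))^(2*l+1)
          = -(Complex.I^(2*l+1) * (lam^(2*l+1) / (ξ r^(2*l+1) * κ r^(2*l+1)))) := by
        rw [hodd.neg_pow]
        simp only [mul_pow, div_pow]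
        rw [hql]
        ring
      have hA : (κ r * ξ r / lam)^(2*l+1)
          = κ r^(2*l+1) * ξ r^(2*l+1) / lam^(2*l+1) := by
        rw [div_pow, mul_pow]
      rw [Finset.prod_mul_distrib, Finset.prod_mul_distrib, Finset.prod_mul_distrib,
        Finset.prod_mul_distrib, Finset.prod_inv_distrib, hqprod, inv_one,
        prod_one_add hq, prod_one_add hq]
      simp only [Finset.prod_const, Finset.card_range]
      rw [hA, hc1, hc2]
      have hkey := keyD (Complex.I^(2*l+1)) (κ r^(2*l+1)) (ξ r^(2*l+1)) (lam^(2*l+1))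
        hJ2 hJ0 (pow_ne_zero _ (hκ r)) (pow_ne_zero _ (hξ r)) (pow_ne_zero _ hlam)
      rw [ha, hb]
      linear_combination hkey
    calc ∏ k ∈ Finset.range (2*l+1), dN l q κ ξ (q ^ (k+1) * lam)
        = ∏ k ∈ Finset.range (2*l+1), ∏ r : Fin N, (Complex.I *
            ((κ r * ξ r / lam) * (q^(k+1))⁻¹
              * (1 + (-(Complex.I * q^(l+1) * (lam / ξ r) * κ r)) * q^(k+1))
              * (1 + (-(Complex.I * q^(l+1) * (lam / ξ r) / κ r)) * q^(k+1)))) :=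
          Finset.prod_congr rfl fun k _ => (hk1 k).symm
      _ = ∏ r : Fin N, ∏ k ∈ Finset.range (2*l+1), (Complex.I *
            ((κ r * ξ r / lam) * (q^(k+1))⁻¹
              * (1 + (-(Complex.I * q^(l+1) * (lam / ξ r) * κ r)) * q^(k+1))
              * (1 + (-(Complex.I * q^(l+1) * (lam / ξ r) / κ r)) * q^(k+1)))) :=
          Finset.prod_comm
      _ = ∏ r : Fin N, (a r + b r) := Finset.prod_congr rfl fun r _ => hper r
      _ = c + d := hs'.symm
      _ = _ := by rw [h00, h01]
end
end

section
/- (Core of Proposition 6.2: one-dimensionality of the kernel of the discrete Baxter matrix.) Let ζ ∈ ℂ∖{0} and let a, d, t : ℂ → ℂ be functions. Define the p×p complex matrix D with rows and columns indexed by k ∈ {0,1,…,p−1} by D_{kk} = t(q^k ζ), D_{k,k+1 mod p} = −d(q^k ζ), D_{k,k−1 mod p} = −a(q^k ζ), and all other entries zero. If a(ζ) = 0, d(q^k ζ) ≠ 0 for all k = 0,…,p−2, and det D = 0, then the kernel of D (as a linear map ℂ^p → ℂ^p) has dimension exactly one. -/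
open scoped BigOperators Matrix

noncomputable section

open SG
/-- **One-dimensionality of the kernel of the discrete Baxter matrix**
(core of Proposition 6.2). -/
theorem discrete_baxter_kernel_dim_one (l : ℕ) (hl : 1 ≤ l)
    (q : ℂ) (hq : IsPrimitiveRoot q (2*l+1))
    (ζ : ℂ) (hζ : ζ ≠ 0) (a d t : ℂ → ℂ)
    (D : Matrix (ZMod (2*l+1)) (ZMod (2*l+1)) ℂ)
    (hD : ∀ k k' : ZMod (2*l+1),
      D k k' = if k' = k then t (q ^ k.val * ζ)
        else if k' = k + 1 then -d (q ^ k.val * ζ)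
        else if k' = k - 1 then -a (q ^ k.val * ζ)
        else 0)
    (ha : a ζ = 0) (hd : ∀ k : ℕ, k < 2*l → d (q ^ k * ζ) ≠ 0)
    (hdet : D.det = 0) :
    Module.finrank ℂ ↥(LinearMap.ker D.mulVecLin) = 1 := by
  classical
  have hp3 : 3 ≤ 2*l+1 := by omega
  haveI : NeZero (2*l+1) := ⟨by omega⟩
  haveI : Fact (1 < 2*l+1) := ⟨by omega⟩
  have h2 : (2 : ZMod (2*l+1)) ≠ 0 := by
    intro h
    have h' : ((2:ℕ) : ZMod (2*l+1)) = 0 := by exact_mod_cast h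
    have := (ZMod.natCast_eq_zero_iff 2 (2*l+1)).mp h'
    have := Nat.le_of_dvd (by norm_num) this
    omega
  -- key: any kernel vector with vanishing 0-entry is zero
  have key : ∀ x : ZMod (2*l+1) → ℂ, D.mulVec x = 0 → x 0 = 0 → x = 0 := by
    intro x hx h0
    have row : ∀ k : ZMod (2*l+1),
        t (q ^ k.val * ζ) * x k - d (q ^ k.val * ζ) * x (k+1)
          - a (q ^ k.val * ζ) * x (k-1) = 0 := by
      intro k
      have hne1 : k ≠ k + 1 := by
        intro h
        have : (0 : ZMod (2*l+1)) = 1 := by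
          have := congrArg (· - k) h; simpa using this
        exact one_ne_zero this.symm
      have hne2 : k ≠ k - 1 := by
        intro h
        have : (0 : ZMod (2*l+1)) = -1 := by
          have := congrArg (· - k) h; simpa using this
        have : (1 : ZMod (2*l+1)) = 0 := by
          have := congrArg (-·) this; simpa using this
        exact one_ne_zero this
      have hne3 : k + 1 ≠ k - 1 := by
        intro h
        apply h2
        have := congrArg (· - (k - 1)) h
        simp at this
        calc (2 : ZMod (2*l+1)) = (k+1) - (k-1) := by ring
          _ = 0 := by rw [h]; ring
      have hk := congrFun hx k
      simp only [Matrix.mulVec, dotProduct, Pi.zero_apply] at hk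
      have hterm : ∀ j : ZMod (2*l+1), D k j * x j =
          (if j = k then t (q ^ k.val * ζ) * x k else 0) +
          (if j = k + 1 then -d (q ^ k.val * ζ) * x (k+1) else 0) +
          (if j = k - 1 then -a (q ^ k.val * ζ) * x (k-1) else 0) := by
        intro j
        rw [hD]
        by_cases hjk : j = k
        · subst hjk
          simp [hne1, hne2]
        · by_cases hjk1 : j = k + 1
          · subst hjk1
            simp [hne1.symm, hne3]
          · by_cases hjk2 : j = k - 1
            · subst hjk2
              simp [hne2.symm, hne3.symm]
            · simp [hjk, hjk1, hjk2]
      rw [Finset.sum_congr rfl (fun j _ => hterm j)] at hk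
      simp only [Finset.sum_add_distrib, Finset.sum_ite_eq', Finset.mem_univ, if_true] at hk
      linear_combination hk
    have main : ∀ n : ℕ, n < 2*l+1 → x ((n : ℕ) : ZMod (2*l+1)) = 0 := by
      intro n
      induction n using Nat.strong_induction_on with
      | _ n ih =>
        intro hn
        match n with
        | 0 => simpa using h0
        | (m+1) =>
          have hm : m < 2*l+1 := by omega
          have hval : ((m : ZMod (2*l+1))).val = m := ZMod.val_natCast_of_lt hm
          have hrow := row ((m : ℕ) : ZMod (2*l+1))
          have hxm : x ((m : ℕ) : ZMod (2*l+1)) = 0 := ih m (by omega) hm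
          have hxprev : a (q ^ ((m : ZMod (2*l+1))).val * ζ) *
              x (((m : ℕ) : ZMod (2*l+1)) - 1) = 0 := by
            match m with
            | 0 =>
              rw [hval]
              simp [ha]
            | (m'+1) =>
              have hcast : (((m'+1 : ℕ)) : ZMod (2*l+1)) - 1 = ((m' : ℕ) : ZMod (2*l+1)) := by
                push_cast; ring
              rw [hcast, ih m' (by omega) (by omega), mul_zero]
          have hd' : d (q ^ ((m : ZMod (2*l+1))).val * ζ) ≠ 0 := by
            rw [hval]; exact hd m (by omega)
          have hzero : d (q ^ ((m : ZMod (2*l+1))).val * ζ) *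
              x (((m : ℕ) : ZMod (2*l+1)) + 1) = 0 := by
            linear_combination -hrow + t (q ^ ((m : ZMod (2*l+1))).val * ζ) * hxm - hxprev
          have hcast : (((m : ℕ)) : ZMod (2*l+1)) + 1 = (((m+1 : ℕ)) : ZMod (2*l+1)) := by
            push_cast; ring
          rw [hcast] at hzero
          exact (mul_eq_zero.mp hzero).resolve_left hd'
    funext k
    have := main k.val k.val_lt
    rwa [ZMod.natCast_val, ZMod.cast_id] at this
  -- the evaluation-at-0 map on the kernel is injective
  have hinj : Function.Injective
      ((LinearMap.proj (0 : ZMod (2*l+1)) : (ZMod (2*l+1) → ℂ) →ₗ[ℂ] ℂ).comp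
        (LinearMap.ker D.mulVecLin).subtype) := by
    rw [← LinearMap.ker_eq_bot, LinearMap.ker_eq_bot']
    rintro ⟨x, hx⟩ h
    have hx' : D.mulVec x = 0 := by
      simpa [Matrix.mulVecLin_apply] using (LinearMap.mem_ker.mp hx)
    have h0 : x 0 = 0 := h
    ext i
    exact congrFun (key x hx' h0) i
  have hle : Module.finrank ℂ ↥(LinearMap.ker D.mulVecLin) ≤ 1 := by
    have := LinearMap.finrank_le_finrank_of_injective hinj
    simpa using this
  have hne : LinearMap.ker D.mulVecLin ≠ ⊥ := by
    obtain ⟨v, hv0, hv⟩ := Matrix.exists_mulVec_eq_zero_iff.mpr hdet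
    intro h
    have hmem : v ∈ LinearMap.ker D.mulVecLin := by
      simpa [LinearMap.mem_ker, Matrix.mulVecLin_apply] using hv
    rw [h] at hmem
    exact hv0 (by simpa using hmem)
  have hpos : 0 < Module.finrank ℂ ↥(LinearMap.ker D.mulVecLin) := by
    rw [Module.finrank_pos_iff]
    exact Submodule.nontrivial_iff_ne_bot.mpr hne
  omega
end
end

section
/- (Lemma 7.1, asymptotics part: behavior of transfer-matrix eigenvalues for even N.) Let N be even and define Θ = ∏_{n=1}^{N} v_n^{(−1)^{1+n}}. Suppose ψ ∈ H, ψ ≠ 0, k ∈ {−l,…,l}, and t : ℂ∖{0} → ℂ are such that T(λ)ψ = t(λ)ψ for all λ ∈ ℂ∖{0} and Θψ = q^k ψ. Then λ^N t(λ) is a polynomial in λ² of degree N, its leading coefficient (the coefficient of λ^{2N}) equals (∏_{a=1}^{N} κ_a/(i ξ_a))·(q^k + q^{−k}), and its constant coefficient equals (∏_{a=1}^{N} κ_a ξ_a/i)·(q^k + q^{−k}). -/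
open scoped BigOperators Matrix

noncomputable section

open SG

namespace SGaux
variable {l N : ℕ}

abbrev R (l N : ℕ) := Matrix (Idx l N) (Idx l N) ℂ
abbrev A2 (l N : ℕ) := Matrix (Fin 2) (Fin 2) (R l N)

def Sm (d : Idx l N) : R l N := Matrix.of fun k k' => if k' = k + d then 1 else 0

lemma Sm_zero : (Sm 0 : R l N) = 1 := by
  ext k k'; simp [Sm, Matrix.one_apply, eq_comm]

lemma Sm_mul (d e : Idx l N) : (Sm d : R l N) * Sm e = Sm (d + e) := by
  ext k k''
  simp only [Sm, Matrix.mul_apply, Matrix.of_apply, ite_mul, one_mul, zero_mul]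
  rw [Finset.sum_ite_eq']
  simp [add_assoc]

lemma Sm_mulVec (d : Idx l N) (ψ : Idx l N → ℂ) :
    (Sm d : R l N).mulVec ψ = fun k => ψ (k + d) := by
  funext k
  simp [Sm, Matrix.mulVec, dotProduct]

end SGaux
namespace SGaux
variable {l N : ℕ}

def Dg (a : A2 l N) : Prop := a 0 1 = 0 ∧ a 1 0 = 0
def Ad (a : A2 l N) : Prop := a 0 0 = 0 ∧ a 1 1 = 0

lemma mul_entry (a b : A2 l N) (i j : Fin 2) :
    (a * b) i j = a i 0 * b 0 j + a i 1 * b 1 j := by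
  simp [Matrix.mul_apply, Fin.sum_univ_two]

lemma Dg.one : Dg (1 : A2 l N) := by
  constructor <;> simp [Matrix.one_apply]

lemma Dg.zero : Dg (0 : A2 l N) := ⟨rfl, rfl⟩
lemma Ad.zero : Ad (0 : A2 l N) := ⟨rfl, rfl⟩

lemma Dg.add {a b : A2 l N} (ha : Dg a) (hb : Dg b) : Dg (a + b) := by
  constructor <;> simp [Matrix.add_apply, ha.1, ha.2, hb.1, hb.2]

lemma Ad.add {a b : A2 l N} (ha : Ad a) (hb : Ad b) : Ad (a + b) := by
  constructor <;> simp [Matrix.add_apply, ha.1, ha.2, hb.1, hb.2]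

lemma Dg.mul_dg {a b : A2 l N} (ha : Dg a) (hb : Dg b) : Dg (a * b) := by
  constructor <;> rw [mul_entry] <;> simp [ha.1, ha.2, hb.1, hb.2]

lemma Dg.mul_ad {a b : A2 l N} (ha : Dg a) (hb : Ad b) : Ad (a * b) := by
  constructor <;> rw [mul_entry] <;> simp [ha.1, ha.2, hb.1, hb.2]

lemma Ad.mul_dg {a b : A2 l N} (ha : Ad a) (hb : Dg b) : Ad (a * b) := by
  constructor <;> rw [mul_entry] <;> simp [ha.1, ha.2, hb.1, hb.2]

lemma Ad.mul_ad {a b : A2 l N} (ha : Ad a) (hb : Ad b) : Dg (a * b) := by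
  constructor <;> rw [mul_entry] <;> simp [ha.1, ha.2, hb.1, hb.2]

def shf (a : ℕ → A2 l N) : ℕ → A2 l N := fun j => if j = 0 then 0 else a (j-1)

lemma sum_shf (a : ℕ → A2 l N) (m : ℕ) (lam : ℂ) :
    ∑ j ∈ Finset.range (m+1), lam^j • shf a j = ∑ j ∈ Finset.range m, lam^(j+1) • a j := by
  rw [Finset.sum_range_succ']
  simp [shf]

end SGaux
namespace SGaux
variable {l N : ℕ}

lemma ext_sum (a : ℕ → A2 l N) {m m' : ℕ} (h : m ≤ m') (h0 : ∀ j, m ≤ j → a j = 0) (lam : ℂ):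
    ∑ j ∈ Finset.range m', lam^j • a j = ∑ j ∈ Finset.range m, lam^j • a j :=
  (Finset.sum_subset (Finset.range_subset_range.mpr h)
    (fun j _ hj => by rw [h0 j (by simpa using hj), smul_zero])).symm

lemma shf_zero (a : ℕ → A2 l N) : shf a 0 = 0 := rfl
lemma shf_succ (a : ℕ → A2 l N) (j : ℕ) : shf a (j+1) = a j := rfl

lemma laurent (ts : List (A2 l N × A2 l N × A2 l N))
    (hts : ∀ x ∈ ts, Dg x.1 ∧ Ad x.2.1 ∧ Ad x.2.2) :
    ∃ P : ℕ → A2 l N,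
      (∀ lam : ℂ, lam ≠ 0 →
        lam ^ ts.length • (ts.map fun x => x.1 + lam • x.2.1 + lam⁻¹ • x.2.2).prod
          = ∑ j ∈ Finset.range (2 * ts.length + 1), lam ^ j • P j) ∧
      (∀ j, 2 * ts.length < j → P j = 0) ∧
      P (2 * ts.length) = (ts.map fun x => x.2.1).prod ∧
      P 0 = (ts.map fun x => x.2.2).prod ∧
      (∀ j, (Even (j + ts.length) → Dg (P j)) ∧ (¬Even (j + ts.length) → Ad (P j))) := by
  induction ts with
  | nil =>
    refine ⟨fun j => if j = 0 then 1 else 0, ?_, ?_, ?_, ?_, ?_⟩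
    · intro lam _; simp
    · intro j hj
      simp only [List.length_nil] at hj
      beta_reduce
      rw [if_neg (by omega : ¬ j = 0)]
    · simp
    · simp
    · intro j
      constructor
      · intro _
        by_cases hj : j = 0 <;> simp [hj, Dg.one, Dg.zero]
      · intro hj
        have : j ≠ 0 := by rintro rfl; simp at hj
        simp [this, Ad.zero]
  | cons x ts ih =>
    obtain ⟨P, heq, hsupp, htop, hbot, hpar⟩ := ih (fun y hy => hts y (List.mem_cons_of_mem x hy))
    set n := ts.length with hn
    have hx := hts x List.mem_cons_self
    refine ⟨fun j => x.2.2 * P j + shf (fun i => x.1 * P i) j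
        + shf (shf (fun i => x.2.1 * P i)) j, ?_, ?_, ?_, ?_, ?_⟩
    · intro lam hlam
      rw [List.map_cons, List.prod_cons, List.length_cons]
      have key : lam^(n+1) • ((x.1 + lam • x.2.1 + lam⁻¹ • x.2.2)
            * (ts.map fun x => x.1 + lam • x.2.1 + lam⁻¹ • x.2.2).prod)
          = x.2.2 * (lam^n • (ts.map fun x => x.1 + lam • x.2.1 + lam⁻¹ • x.2.2).prod)
            + lam • (x.1 * (lam^n • (ts.map fun x => x.1 + lam • x.2.1 + lam⁻¹ • x.2.2).prod))
            + lam^2 • (x.2.1 * (lam^n • (ts.map fun x => x.1 + lam • x.2.1 + lam⁻¹ • x.2.2).prod)) := by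
        rw [add_mul, add_mul, smul_mul_assoc, smul_mul_assoc,
          mul_smul_comm, mul_smul_comm, mul_smul_comm]
        match_scalars <;> field_simp <;> ring
      rw [key, heq lam hlam]
      set SS := ∑ j ∈ Finset.range (2*n+1), lam ^ j • P j with hSS
      have hT1 : x.2.2 * SS = ∑ j ∈ Finset.range (2*(n+1)+1), lam ^ j • (x.2.2 * P j) := by
        rw [ext_sum (fun j => x.2.2 * P j) (by omega : 2*n+1 ≤ 2*(n+1)+1)
          (fun j hj => by beta_reduce; rw [hsupp j (by omega), mul_zero]) lam, hSS, Finset.mul_sum]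
        exact Finset.sum_congr rfl fun j _ => (mul_smul_comm _ _ _)
      have hT2 : lam • (x.1 * SS) = ∑ j ∈ Finset.range (2*(n+1)+1),
          lam ^ j • shf (fun i => x.1 * P i) j := by
        rw [show 2*(n+1)+1 = (2*n+1+1)+1 from by omega,
          sum_shf (fun i => x.1 * P i) (2*n+1+1) lam,
          Finset.sum_range_succ (f := fun j => lam ^ (j+1) • (x.1 * P j)) (n := 2*n+1),
          hsupp (2*n+1) (by omega), mul_zero, smul_zero, add_zero, hSS,
          Finset.mul_sum, Finset.smul_sum]
        exact Finset.sum_congr rfl fun j _ => by rw [mul_smul_comm, smul_smul, ← pow_succ']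
      have hT3 : lam^2 • (x.2.1 * SS) = ∑ j ∈ Finset.range (2*(n+1)+1),
          lam ^ j • shf (shf (fun i => x.2.1 * P i)) j := by
        rw [show 2*(n+1)+1 = (2*n+1+1)+1 from by omega,
          sum_shf (shf fun i => x.2.1 * P i) (2*n+1+1) lam]
        have h2 : ∑ j ∈ Finset.range (2*n+1+1), lam ^ (j+1) • shf (fun i => x.2.1 * P i) j
            = lam • ∑ j ∈ Finset.range (2*n+1+1), lam ^ j • shf (fun i => x.2.1 * P i) j := by
          rw [Finset.smul_sum]
          exact Finset.sum_congr rfl fun j _ => by rw [smul_smul, ← pow_succ']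
        rw [h2, sum_shf (fun i => x.2.1 * P i) (2*n+1) lam, hSS, Finset.smul_sum,
          Finset.mul_sum, Finset.smul_sum]
        refine Finset.sum_congr rfl fun j _ => ?_
        rw [mul_smul_comm, smul_smul, smul_smul, ← pow_succ', ← pow_add]
        ring_nf
      rw [hT1, hT2, hT3, ← Finset.sum_add_distrib, ← Finset.sum_add_distrib]
      exact Finset.sum_congr rfl fun j _ => by simp only [← smul_add]
    · intro j hj
      beta_reduce
      rw [List.length_cons] at hj
      rcases j with _|_|j
      · omega
      · omega
      · rw [shf_succ, shf_succ, shf_succ,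
          hsupp _ (by omega : 2*n < j+1+1), hsupp _ (by omega : 2*n < j+1),
          hsupp _ (by omega : 2*n < j)]
        simp
    · beta_reduce
      rw [List.length_cons, List.map_cons, List.prod_cons, ← htop,
        show 2*(n+1) = (2*n+1)+1 from by omega, shf_succ, shf_succ, shf_succ,
        hsupp (2*n+1) (by omega), hsupp (2*n+1+1) (by omega)]
      simp
    · beta_reduce
      rw [List.map_cons, List.prod_cons, ← hbot, shf_zero, shf_zero]
      simp
    · intro j
      beta_reduce
      rw [List.length_cons]
      rcases j with _|_|j
      · rw [shf_zero, shf_zero, add_zero, add_zero]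
        constructor
        · intro hE
          have h0 : ¬ Even (0 + n) := by simp only [Nat.even_iff] at hE ⊢; omega
          exact Ad.mul_ad hx.2.2 ((hpar 0).2 h0)
        · intro hE
          have h0 : Even (0 + n) := by simp only [Nat.even_iff] at hE ⊢; omega
          exact Ad.mul_dg hx.2.2 ((hpar 0).1 h0)
      · rw [shf_succ, shf_succ, shf_zero, add_zero]
        constructor
        · intro hE
          have h0 : ¬ Even (1 + n) := by simp only [Nat.even_iff] at hE ⊢; omega
          have h1 : Even (0 + n) := by simp only [Nat.even_iff] at hE ⊢; omega
          exact Dg.add (Ad.mul_ad hx.2.2 ((hpar 1).2 h0)) (Dg.mul_dg hx.1 ((hpar 0).1 h1))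
        · intro hE
          have h0 : Even (1 + n) := by simp only [Nat.even_iff] at hE ⊢; omega
          have h1 : ¬ Even (0 + n) := by simp only [Nat.even_iff] at hE ⊢; omega
          exact Ad.add (Ad.mul_dg hx.2.2 ((hpar 1).1 h0)) (Dg.mul_ad hx.1 ((hpar 0).2 h1))
      · rw [shf_succ, shf_succ, shf_succ]
        constructor
        · intro hE
          have h0 : ¬ Even (j + 1 + 1 + n) := by simp only [Nat.even_iff] at hE ⊢; omega
          have h1 : Even (j + 1 + n) := by simp only [Nat.even_iff] at hE ⊢; omega
          have h2 : ¬ Even (j + n) := by simp only [Nat.even_iff] at hE ⊢; omega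
          exact Dg.add (Dg.add (Ad.mul_ad hx.2.2 ((hpar (j+1+1)).2 h0))
            (Dg.mul_dg hx.1 ((hpar (j+1)).1 h1))) (Ad.mul_ad hx.2.1 ((hpar j).2 h2))
        · intro hE
          have h0 : Even (j + 1 + 1 + n) := by simp only [Nat.even_iff] at hE ⊢; omega
          have h1 : ¬ Even (j + 1 + n) := by simp only [Nat.even_iff] at hE ⊢; omega
          have h2 : Even (j + n) := by simp only [Nat.even_iff] at hE ⊢; omega
          exact Ad.add (Ad.add (Ad.mul_dg hx.2.2 ((hpar (j+1+1)).1 h0))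
            (Dg.mul_ad hx.1 ((hpar (j+1)).2 h1))) (Ad.mul_dg hx.2.1 ((hpar j).1 h2))

end SGaux
namespace SGaux
variable {l N : ℕ}

def ADm (d : Idx l N) : A2 l N := !![0, Sm d; Sm (-d), 0]
def DGm (d : Idx l N) : A2 l N := !![Sm d, 0; 0, Sm (-d)]

lemma DGm_zero : (DGm 0 : A2 l N) = 1 := by
  rw [Matrix.one_fin_two, DGm, neg_zero, Sm_zero]

lemma ADm_mul_ADm (d e : Idx l N) : ADm d * ADm e = DGm (d - e) := by
  rw [ADm, ADm, DGm, Matrix.mul_fin_two]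
  simp [Sm_mul, sub_eq_add_neg, neg_add_rev, add_comm]

lemma ADm_mul_DGm (d e : Idx l N) : ADm d * DGm e = ADm (d - e) := by
  rw [ADm, ADm, DGm, Matrix.mul_fin_two]
  simp only [Matrix.zero_mul, Matrix.mul_zero, zero_add, add_zero, Sm_mul]
  congr 2 <;> abel_nf

def altsum : List (Idx l N) → Idx l N
  | [] => 0
  | d :: ds => d - altsum ds

lemma prod_ADm (ds : List (Idx l N)) :
    (ds.map ADm).prod = if Even ds.length then DGm (altsum ds) else ADm (altsum ds) := by
  induction ds with
  | nil => simp [altsum, DGm_zero]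
  | cons d ds ih =>
    rw [List.map_cons, List.prod_cons, ih, List.length_cons]
    by_cases h : Even ds.length
    · rw [if_pos h, if_neg (by simp [Nat.even_add_one, h]), ADm_mul_DGm]
      rfl
    · rw [if_neg h, if_pos (by simp [Nat.even_add_one, h]), ADm_mul_ADm]
      rfl

lemma altsum_append (ds : List (Idx l N)) (d : Idx l N) :
    altsum (ds ++ [d]) = altsum ds + (if Even ds.length then d else -d) := by
  induction ds with
  | nil => simp [altsum]
  | cons e ds ih =>
    rw [List.cons_append, altsum, ih, altsum, List.length_cons]
    by_cases h : Even ds.length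
    · rw [if_pos h, if_neg (by simp [Nat.even_add_one, h])]
      abel
    · rw [if_neg h, if_pos (by simp [Nat.even_add_one, h])]
      abel

lemma altsum_reverse (ds : List (Idx l N)) :
    altsum ds.reverse = if Even ds.length then -altsum ds else altsum ds := by
  induction ds with
  | nil => simp [altsum]
  | cons d ds ih =>
    rw [List.reverse_cons, altsum_append, ih, List.length_reverse, altsum, List.length_cons]
    by_cases h : Even ds.length
    · rw [if_pos h, if_pos h, if_neg (by simp [Nat.even_add_one, h])]
      abel
    · rw [if_neg h, if_neg h, if_pos (by simp [Nat.even_add_one, h])]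
      abel

lemma altsum_ofFn : ∀ {M : ℕ} (g : Fin M → Idx l N),
    altsum (List.ofFn g) = ∑ n : Fin M, (if Even (n:ℕ) then g n else -g n) := by
  intro M
  induction M with
  | zero => intro g; simp [altsum]
  | succ M ih =>
    intro g
    rw [List.ofFn_succ, altsum, ih, Fin.sum_univ_succ]
    have : ∀ n : Fin M, (if Even ((n.succ : Fin (M+1)) : ℕ) then g n.succ else -g n.succ)
        = -(if Even (n : ℕ) then (fun i => g (Fin.succ i)) n else -((fun i => g (Fin.succ i)) n)) := by
      intro n
      simp only [Fin.val_succ, Nat.even_add_one]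
      by_cases h : Even (n : ℕ) <;> simp [h]
    rw [Finset.sum_congr rfl (fun n _ => this n), Finset.sum_neg_distrib]
    simp [sub_eq_add_neg]

lemma prod_Sm (ds : List (Idx l N)) : (ds.map Sm).prod = Sm ds.sum := by
  induction ds with
  | nil => simp [Sm_zero]
  | cons d ds ih => rw [List.map_cons, List.prod_cons, ih, Sm_mul, List.sum_cons]

lemma prod_map_smul (ps : List (ℂ × Idx l N)) :
    (ps.map fun p => p.1 • ADm p.2).prod
      = (ps.map Prod.fst).prod • ((ps.map Prod.snd).map ADm).prod := by
  induction ps with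
  | nil => simp
  | cons p ps ih =>
    simp only [List.map_cons, List.prod_cons, ih]
    rw [smul_mul_assoc, mul_smul_comm, smul_smul]

end SGaux
namespace SGaux
variable {l N : ℕ}

lemma update_sub (k : Idx l N) (n : Fin N) :
    Function.update k n (k n - 1) = k + (-(Pi.single n 1)) := by
  funext m
  by_cases h : m = n
  · subst h; simp [sub_eq_add_neg]
  · simp [Function.update_apply, h, Pi.single_apply]

lemma update_add (k : Idx l N) (n : Fin N) :
    Function.update k n (k n + 1) = k + Pi.single n 1 := by
  funext m
  by_cases h : m = n
  · subst h; simp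
  · simp [Function.update_apply, h, Pi.single_apply]

lemma vop_one (n : Fin N) : vop l (fun _ : Fin N => (1:ℂ)) n = Sm (-(Pi.single n 1)) := by
  ext k k'
  rw [vop, Sm]
  simp [update_sub]

lemma vopInv_one (n : Fin N) : vopInv l (fun _ : Fin N => (1:ℂ)) n = Sm (Pi.single n 1) := by
  ext k k'
  rw [vopInv, Sm]
  simp [update_add]

def dT (l N : ℕ) : Idx l N := fun m => if Even (m:ℕ) then -1 else 1

lemma sum_single_ite :
    ∑ n : Fin N, (if Even (n:ℕ) then -(Pi.single n 1) else (Pi.single n 1 : Idx l N)) = dT l N := by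
  funext m
  rw [Finset.sum_apply]
  rw [Finset.sum_eq_single m]
  · by_cases h : Even (m:ℕ) <;> simp [h, dT]
  · intro n _ hn
    by_cases h : Even (n:ℕ) <;> simp [h, Pi.single_apply, (by simpa [eq_comm] using hn : ¬ m = n)]
  · simp

lemma theta_eq : (Theta l : R l N) = Sm (dT l N) := by
  rw [Theta]
  have h1 : (fun n : Fin N => if Even (n : ℕ) then vop l (fun _ : Fin N => (1:ℂ)) n
      else vopInv l (fun _ : Fin N => (1:ℂ)) n)
      = fun n : Fin N => Sm (if Even (n:ℕ) then -(Pi.single n 1) else (Pi.single n 1 : Idx l N)) := by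
    funext n
    rw [vop_one, vopInv_one, apply_ite Sm]
  have h2 := List.map_ofFn (f := fun n : Fin N => (if Even (n:ℕ) then -(Pi.single n 1) else (Pi.single n 1 : Idx l N))) (g := Sm (l := l) (N := N))
  simp only [Function.comp_def] at h2
  rw [h1, ← h2, prod_Sm, List.sum_ofFn, sum_single_ite]

end SGaux
namespace SGaux
variable {l N : ℕ}

def Dmat (q : ℂ) (κ : Fin N → ℂ) (n : Fin N) : A2 l N :=
  (κ n / Complex.I) • !![
    Complex.I • (uop l q (fun _ => 1) n *
      (((q ^ (l+1))⁻¹ * κ n) • vop l (fun _ => 1) n + (q ^ (l+1) * (κ n)⁻¹) • vopInv l (fun _ => 1) n)), 0;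
    0, Complex.I • (uopInv l q (fun _ => 1) n *
      ((q ^ (l+1) * (κ n)⁻¹) • vop l (fun _ => 1) n + ((q ^ (l+1))⁻¹ * κ n) • vopInv l (fun _ => 1) n))]

def Xmat (κ ξ : Fin N → ℂ) (n : Fin N) : A2 l N :=
  (κ n / (Complex.I * ξ n)) • ADm (-(Pi.single n 1))

def Ymat (κ ξ : Fin N → ℂ) (n : Fin N) : A2 l N :=
  (-(κ n * ξ n) / Complex.I) • ADm (Pi.single n 1)

lemma Dg_Dmat (q : ℂ) (κ : Fin N → ℂ) (n : Fin N) : Dg (Dmat (l := l) q κ n) := by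
  constructor <;> simp [Dmat, Dg]

lemma Ad_smul (c : ℂ) {a : A2 l N} (h : Ad a) : Ad (c • a) := by
  exact ⟨by simp [Matrix.smul_apply, h.1], by simp [Matrix.smul_apply, h.2]⟩

lemma Ad_ADm (d : Idx l N) : Ad (ADm d) := by
  constructor <;> simp [ADm]

lemma Ad_Xmat (κ ξ : Fin N → ℂ) (n : Fin N) : Ad (Xmat (l := l) κ ξ n) := Ad_smul _ (Ad_ADm _)
lemma Ad_Ymat (κ ξ : Fin N → ℂ) (n : Fin N) : Ad (Ymat (l := l) κ ξ n) := Ad_smul _ (Ad_ADm _)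

lemma lax_decomp (q : ℂ) (κ ξ : Fin N → ℂ) (hξ : ∀ n, ξ n ≠ 0)
    (lam : ℂ) (hlam : lam ≠ 0) (n : Fin N) :
    Lax l q κ ξ (fun _ => 1) (fun _ => 1) lam n
      = Dmat q κ n + lam • Xmat κ ξ n + lam⁻¹ • Ymat κ ξ n := by
  have hξn := hξ n
  have hI := Complex.I_ne_zero
  refine Matrix.ext fun i j => ?_
  rw [Lax, Dmat, Xmat, Ymat, ADm, ADm]
  fin_cases i <;> fin_cases j <;>
    simp [Matrix.smul_apply, Matrix.add_apply, Matrix.sub_apply, vop_one, vopInv_one]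
  all_goals match_scalars
  all_goals field_simp
  all_goals ring_nf
  all_goals simp only [Complex.I_sq]
  all_goals ring

end SGaux
namespace SGaux
variable {l N : ℕ}

lemma sum_smul_mulVec (s : Finset ℕ) (A : ℕ → R l N) (co : ℕ → ℂ) (v : Idx l N → ℂ)
    (m : Idx l N) :
    ((∑ j ∈ s, co j • A j).mulVec v) m = ∑ j ∈ s, co j * ((A j).mulVec v m) := by
  classical
  induction s using Finset.induction with
  | empty => simp [Matrix.zero_mulVec]
  | insert _ _ h ih =>
    rw [Finset.sum_insert h, Matrix.add_mulVec, Pi.add_apply, ih, Finset.sum_insert h,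
      Matrix.smul_mulVec]
    simp

lemma trace_smul_DGm (c : ℂ) (dd : Idx l N) :
    (c • DGm dd) 0 0 + (c • DGm dd) 1 1 = c • (Sm dd + Sm (-dd)) := by
  simp [DGm, Matrix.smul_apply, smul_add]

end SGaux

open SGaux in
theorem transfer_eigenvalue_asymptotics' (l N : ℕ) (hl : 1 ≤ l) (hN : Even N)
    (q : ℂ) (hq : IsPrimitiveRoot q (2*l+1))
    (κ ξ : Fin N → ℂ) (hκ : ∀ n, κ n ≠ 0) (hξ : ∀ n, ξ n ≠ 0)
    (ψ : Idx l N → ℂ) (hψ : ψ ≠ 0) (k : ℤ) (hk : -(l : ℤ) ≤ k ∧ k ≤ (l : ℤ))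
    (t : ℂ → ℂ)
    (hT : ∀ lam : ℂ, lam ≠ 0 →
      (Top l q κ ξ (fun _ => 1) (fun _ => 1) lam).mulVec ψ = t lam • ψ)
    (hΘ : (Theta l).mulVec ψ = q ^ k • ψ) :
    ∃ c : ℕ → ℂ,
      (∀ lam : ℂ, lam ≠ 0 →
        lam ^ N * t lam = ∑ j ∈ Finset.range (N + 1), c j * lam ^ (2 * j)) ∧
      c N = (∏ a : Fin N, κ a / (Complex.I * ξ a)) * (q ^ k + q ^ (-k)) ∧
      c 0 = (∏ a : Fin N, κ a * ξ a / Complex.I) * (q ^ k + q ^ (-k)) := by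
  classical
  obtain ⟨m₀, hm₀'⟩ := Function.ne_iff.mp hψ
  have hm₀ : ψ m₀ ≠ 0 := by simpa using hm₀'
  have hq0 : q ≠ 0 := hq.ne_zero (by omega)
  have hqk : q ^ k ≠ 0 := zpow_ne_zero k hq0
  rw [theta_eq, Sm_mulVec] at hΘ
  have hplus : ∀ m : Idx l N, ψ (m + dT l N) = q ^ k * ψ m := by
    intro m; have := congrFun hΘ m; simpa using this
  have hminus : ∀ m : Idx l N, ψ (m + -(dT l N)) = q ^ (-k) * ψ m := by
    intro m
    have h1 := hplus (m - dT l N)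
    rw [show m - dT l N + dT l N = m from by abel] at h1
    rw [show m + -(dT l N) = m - dT l N from by abel, zpow_neg]
    calc ψ (m - dT l N) = (q^k)⁻¹ * (q^k * ψ (m - dT l N)) := (inv_mul_cancel_left₀ hqk _).symm
      _ = (q^k)⁻¹ * ψ m := by rw [h1]
  set ts : List (A2 l N × A2 l N × A2 l N) :=
    (List.ofFn fun n => (Dmat q κ n, Xmat κ ξ n, Ymat κ ξ n)).reverse with hts_def
  have hts : ∀ x ∈ ts, Dg x.1 ∧ Ad x.2.1 ∧ Ad x.2.2 := by
    intro x hx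
    rw [hts_def, List.mem_reverse, List.mem_ofFn] at hx
    obtain ⟨n, rfl⟩ := hx
    exact ⟨Dg_Dmat q κ n, Ad_Xmat κ ξ n, Ad_Ymat κ ξ n⟩
  obtain ⟨P, heq, hsupp, htop, hbot, hpar⟩ := laurent ts hts
  have hlen : ts.length = N := by simp [hts_def]
  rw [hlen] at heq hsupp htop hpar
  have hmap : ∀ lam : ℂ, lam ≠ 0 →
      (ts.map fun x => x.1 + lam • x.2.1 + lam⁻¹ • x.2.2)
        = (List.ofFn fun n : Fin N => Lax l q κ ξ (fun _ => 1) (fun _ => 1) lam n).reverse := by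
    intro lam hlam
    rw [hts_def, List.map_reverse, List.map_ofFn]
    exact congrArg List.reverse (congrArg List.ofFn
      (funext fun n => (lax_decomp q κ ξ hξ lam hlam n).symm))
  have hexp : ∀ lam : ℂ, lam ≠ 0 →
      lam ^ N • Mon l q κ ξ (fun _ => 1) (fun _ => 1) lam
        = ∑ j ∈ Finset.range (2*N+1), lam ^ j • P j := by
    intro lam hlam
    have h := heq lam hlam
    rw [hmap lam hlam] at h
    rw [SG.Mon]
    exact h
  set Tr : ℕ → Matrix (Idx l N) (Idx l N) ℂ := fun j => P j 0 0 + P j 1 1 with hTrdef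
  set d : ℕ → ℂ := fun j => (Tr j).mulVec ψ m₀ / ψ m₀ with hd
  have hdj : ∀ j, (Tr j).mulVec ψ m₀ = d j * ψ m₀ := fun j => (div_mul_cancel₀ _ hm₀).symm
  have hodd : ∀ j, ¬ Even j → d j = 0 := by
    intro j hj
    have hjN : ¬ Even (j + N) := by
      rw [Nat.even_add]
      simp [hj, hN]
    have hAd := (hpar j).2 hjN
    have hTr0 : Tr j = 0 := by rw [hTrdef]; beta_reduce; rw [hAd.1, hAd.2, add_zero]
    rw [hd]
    beta_reduce
    rw [hTr0]
    simp [Matrix.zero_mulVec]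
  -- trace evaluation helper
  have traceval : ∀ (c : ℂ) (dd : Idx l N),
      ((c • DGm dd) 0 0 + (c • DGm dd) 1 1).mulVec ψ m₀
        = c * (ψ (m₀ + dd) + ψ (m₀ + -dd)) := by
    intro c dd
    rw [trace_smul_DGm c dd, Matrix.smul_mulVec, Matrix.add_mulVec, Sm_mulVec, Sm_mulVec]
    simp [mul_add]
  refine ⟨fun i => d (2*i), ?_, ?_, ?_⟩
  · intro lam hlam
    have hTopEq : lam ^ N • Top l q κ ξ (fun _ => 1) (fun _ => 1) lam
        = ∑ j ∈ Finset.range (2*N+1), lam ^ j • Tr j := by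
      have h := hexp lam hlam
      rw [SG.Top, smul_add]
      have h00 := congrArg (fun M : A2 l N => M 0 0) h
      have h11 := congrArg (fun M : A2 l N => M 1 1) h
      simp only [Matrix.smul_apply, Matrix.sum_apply] at h00 h11
      rw [h00, h11, ← Finset.sum_add_distrib]
      refine Finset.sum_congr rfl fun j _ => ?_
      rw [hTrdef]
      beta_reduce
      rw [smul_add]
    have hL : ((lam ^ N • Top l q κ ξ (fun _ => 1) (fun _ => 1) lam).mulVec ψ) m₀
        = lam ^ N * (t lam * ψ m₀) := by
      rw [Matrix.smul_mulVec, hT lam hlam]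
      simp [smul_eq_mul, mul_assoc]
    have hR := sum_smul_mulVec (Finset.range (2*N+1)) Tr (fun j => lam ^ j) ψ m₀
    have e1 : lam ^ N * (t lam * ψ m₀)
        = ∑ j ∈ Finset.range (2*N+1), lam ^ j * (d j * ψ m₀) := by
      rw [← hL, hTopEq, hR]
      exact Finset.sum_congr rfl fun j _ => by rw [hdj j]
    have e2 : ∑ j ∈ Finset.range (2*N+1), lam ^ j * (d j * ψ m₀)
        = ∑ i ∈ Finset.range (N+1), lam ^ (2*i) * (d (2*i) * ψ m₀) := by
      have himg : ((Finset.range (N+1)).image (fun i => 2*i)) ⊆ Finset.range (2*N+1) := by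
        intro j hj
        simp only [Finset.mem_image, Finset.mem_range] at *
        obtain ⟨i, hi, rfl⟩ := hj
        omega
      have hvan : ∀ j ∈ Finset.range (2*N+1),
          j ∉ (Finset.range (N+1)).image (fun i => 2*i) → lam ^ j * (d j * ψ m₀) = 0 := by
        intro j hj hj'
        have hjodd : ¬ Even j := by
          intro hje
          obtain ⟨i, rfl⟩ := hje
          apply hj'
          simp only [Finset.mem_image, Finset.mem_range] at *
          exact ⟨i, by omega, by omega⟩
        rw [hodd j hjodd]
        ring
      calc ∑ j ∈ Finset.range (2*N+1), lam ^ j * (d j * ψ m₀)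
          = ∑ j ∈ (Finset.range (N+1)).image (fun i => 2*i), lam ^ j * (d j * ψ m₀) :=
            (Finset.sum_subset himg hvan).symm
        _ = ∑ i ∈ Finset.range (N+1), lam ^ (2*i) * (d (2*i) * ψ m₀) :=
            Finset.sum_image (fun x _ y _ h => by omega)
    have key : lam ^ N * t lam * ψ m₀
        = (∑ i ∈ Finset.range (N+1), d (2*i) * lam ^ (2*i)) * ψ m₀ := by
      rw [Finset.sum_mul, mul_assoc, e1, e2]
      exact Finset.sum_congr rfl fun i _ => by ring
    exact mul_right_cancel₀ hm₀ key
  · -- leading coefficient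
    have hPtop : P (2*N) = (∏ a : Fin N, κ a / (Complex.I * ξ a)) • DGm (-(dT l N)) := by
      rw [htop, hts_def]
      have h1 : ((List.ofFn fun n => (Dmat q κ n, Xmat κ ξ n, Ymat κ ξ n)).reverse).map
            (fun x : A2 l N × A2 l N × A2 l N => x.2.1)
          = (((List.ofFn fun n : Fin N =>
              (κ n / (Complex.I * ξ n), -(Pi.single n 1 : Idx l N))).reverse).map
              fun p => p.1 • ADm p.2) := by
        rw [List.map_reverse, List.map_reverse, List.map_ofFn, List.map_ofFn]
        rfl
      rw [h1, prod_map_smul]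
      have hsc : (((List.ofFn fun n : Fin N =>
            (κ n / (Complex.I * ξ n), -(Pi.single n 1 : Idx l N))).reverse).map Prod.fst).prod
          = ∏ a : Fin N, κ a / (Complex.I * ξ a) := by
        rw [List.map_reverse, List.prod_reverse, List.map_ofFn, List.prod_ofFn]
        rfl
      have had : ((((List.ofFn fun n : Fin N =>
            (κ n / (Complex.I * ξ n), -(Pi.single n 1 : Idx l N))).reverse).map Prod.snd).map
            ADm).prod = DGm (-(dT l N)) := by
        rw [List.map_reverse, List.map_ofFn]
        have hg : (Prod.snd ∘ fun n : Fin N =>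
            (κ n / (Complex.I * ξ n), -(Pi.single n 1 : Idx l N)))
            = fun n : Fin N => -(Pi.single n 1 : Idx l N) := rfl
        rw [hg, prod_ADm, List.length_reverse, List.length_ofFn, if_pos hN, altsum_reverse,
          List.length_ofFn, if_pos hN, altsum_ofFn]
        have hsum1 : (∑ n : Fin N, if Even (n:ℕ) then (-(Pi.single n 1) : Idx l N)
            else -(-(Pi.single n 1))) = dT l N := by
          rw [← sum_single_ite]
          exact Finset.sum_congr rfl fun n _ => by
            by_cases h : Even (n:ℕ) <;> simp [h]
        rw [hsum1]
      rw [hsc, had]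
    show d (2*N) = _
    rw [hd]
    beta_reduce
    rw [hTrdef]
    beta_reduce
    rw [hPtop]
    rw [traceval]
    rw [neg_neg, hminus, hplus]
    rw [div_eq_iff hm₀]
    ring
  · -- constant coefficient
    have hPbot : P 0 = (∏ a : Fin N, κ a * ξ a / Complex.I) • DGm (dT l N) := by
      rw [hbot, hts_def]
      have h1 : ((List.ofFn fun n => (Dmat q κ n, Xmat κ ξ n, Ymat κ ξ n)).reverse).map
            (fun x : A2 l N × A2 l N × A2 l N => x.2.2)
          = (((List.ofFn fun n : Fin N =>
              (-(κ n * ξ n) / Complex.I, (Pi.single n 1 : Idx l N))).reverse).map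
              fun p => p.1 • ADm p.2) := by
        rw [List.map_reverse, List.map_reverse, List.map_ofFn, List.map_ofFn]
        rfl
      rw [h1, prod_map_smul]
      have hsc : (((List.ofFn fun n : Fin N =>
            (-(κ n * ξ n) / Complex.I, (Pi.single n 1 : Idx l N))).reverse).map Prod.fst).prod
          = ∏ a : Fin N, κ a * ξ a / Complex.I := by
        rw [List.map_reverse, List.prod_reverse, List.map_ofFn, List.prod_ofFn]
        have : ∀ a : Fin N, (Prod.fst ∘ fun n : Fin N =>
            (-(κ n * ξ n) / Complex.I, (Pi.single n 1 : Idx l N))) a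
            = (-1) * (κ a * ξ a / Complex.I) := fun a => by
          show -(κ a * ξ a) / Complex.I = (-1) * (κ a * ξ a / Complex.I)
          ring
        rw [Finset.prod_congr rfl fun a _ => this a, Finset.prod_mul_distrib,
          Finset.prod_const, Finset.card_univ, Fintype.card_fin, hN.neg_one_pow, one_mul]
      have had : ((((List.ofFn fun n : Fin N =>
            (-(κ n * ξ n) / Complex.I, (Pi.single n 1 : Idx l N))).reverse).map Prod.snd).map
            ADm).prod = DGm (dT l N) := by
        rw [List.map_reverse, List.map_ofFn]
        have hg : (Prod.snd ∘ fun n : Fin N =>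
            (-(κ n * ξ n) / Complex.I, (Pi.single n 1 : Idx l N)))
            = fun n : Fin N => (Pi.single n 1 : Idx l N) := rfl
        rw [hg, prod_ADm, List.length_reverse, List.length_ofFn, if_pos hN, altsum_reverse,
          List.length_ofFn, if_pos hN, altsum_ofFn]
        have hsum2 : (∑ n : Fin N, if Even (n:ℕ) then (Pi.single n 1 : Idx l N)
            else -(Pi.single n 1)) = -(dT l N) := by
          rw [← sum_single_ite, ← Finset.sum_neg_distrib]
          exact Finset.sum_congr rfl fun n _ => by
            by_cases h : Even (n:ℕ) <;> simp [h]
        rw [hsum2, neg_neg]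
      rw [hsc, had]
    show d 0 = _
    rw [hd]
    beta_reduce
    rw [hTrdef]
    beta_reduce
    rw [hPbot]
    rw [traceval]
    rw [hminus, hplus]
    rw [div_eq_iff hm₀]
    ring

/-- **Asymptotics of transfer-matrix eigenvalues for even `N`** (Lemma 7.1):
if `T(λ)ψ = t(λ)ψ` and `Θψ = q^k ψ` with `ψ ≠ 0`, `k ∈ {-l,…,l}`, then `λ^N t(λ)` is a
polynomial in `λ²` of degree `N` whose leading coefficient is
`(∏_a κ_a/(i ξ_a))·(q^k+q^{-k})` and whose constant coefficient is
`(∏_a κ_a ξ_a/i)·(q^k+q^{-k})`. -/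
theorem transfer_eigenvalue_asymptotics (l N : ℕ) (hl : 1 ≤ l) (hN : Even N)
    (q : ℂ) (hq : IsPrimitiveRoot q (2*l+1))
    (κ ξ : Fin N → ℂ) (hκ : ∀ n, κ n ≠ 0) (hξ : ∀ n, ξ n ≠ 0)
    (ψ : Idx l N → ℂ) (hψ : ψ ≠ 0) (k : ℤ) (hk : -(l : ℤ) ≤ k ∧ k ≤ (l : ℤ))
    (t : ℂ → ℂ)
    (hT : ∀ lam : ℂ, lam ≠ 0 →
      (Top l q κ ξ (fun _ => 1) (fun _ => 1) lam).mulVec ψ = t lam • ψ)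
    (hΘ : (Theta l).mulVec ψ = q ^ k • ψ) :
    ∃ c : ℕ → ℂ,
      (∀ lam : ℂ, lam ≠ 0 →
        lam ^ N * t lam = ∑ j ∈ Finset.range (N + 1), c j * lam ^ (2 * j)) ∧
      c N = (∏ a : Fin N, κ a / (Complex.I * ξ a)) * (q ^ k + q ^ (-k)) ∧
      c 0 = (∏ a : Fin N, κ a * ξ a / Complex.I) * (q ^ k + q ^ (-k)) := by
  exact transfer_eigenvalue_asymptotics' l N hl hN q hq κ ξ hκ hξ ψ hψ k hk t hT hΘ
end
end

section
/- (Key identity in the proof of integrability: Y_∞† Y_0 is the parity operator.) Let N be odd. Define the p^N×p^N complex matrices Y_0 and Y_∞, with rows and columns indexed by tuples k = (k_1,…,k_N) ∈ (ℤ/pℤ)^N, by (Y_0)_{k,k'} = ∏_{n=1}^{N} q^{−2k_n(k'_n + k'_{n+1})} and (Y_∞)_{k,k'} = ∏_{n=1}^{N} q^{+2k_n(k'_n + k'_{n+1})}, with the cyclic convention k'_{N+1} := k'_1 (the exponents are well defined modulo p since q^p = 1). Then Y_∞†·Y_0 = p^N·U_0, where † is the conjugate-transpose and U_0 is the permutation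 matrix with entries (U_0)_{k,k''} = ∏_{n=1}^{N} δ(k_n + k''_n ≡ 0 mod p). -/
open scoped BigOperators Matrix

noncomputable section

open SG

section AuxSG
variable {l : ℕ} {q : ℂ}

lemma qp_pow_mod (hq : IsPrimitiveRoot q (2*l+1)) (x : ℕ) :
    q ^ (x % (2*l+1)) = q ^ x := by
  conv_rhs => rw [← Nat.mod_add_div x (2*l+1)]
  rw [pow_add, pow_mul, hq.pow_eq_one, one_pow, mul_one]

lemma Qp_add (hq : IsPrimitiveRoot q (2*l+1)) (a b : ZMod (2*l+1)) :
    Qp l q (a+b) = Qp l q a * Qp l q b := by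
  unfold Qp
  rw [ZMod.val_add, qp_pow_mod hq, pow_add]

lemma Qp_zero : Qp l q (0 : ZMod (2*l+1)) = 1 := by
  unfold Qp; rw [ZMod.val_zero, pow_zero]

lemma star_Qp (hq : IsPrimitiveRoot q (2*l+1)) (j : ZMod (2*l+1)) :
    star (Qp l q j) = Qp l q (-j) := by
  have hnorm : ‖q‖ = 1 :=
    Complex.norm_eq_one_of_pow_eq_one hq.pow_eq_one (by omega)
  have h1 : Qp l q j * Qp l q (-j) = 1 := by
    rw [← Qp_add hq, add_neg_cancel, Qp_zero]
  have hn2 : ‖Qp l q j‖ = 1 := by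
    unfold Qp; rw [norm_pow, hnorm, one_pow]
  have h3 := Complex.inv_eq_conj hn2
  rw [show star (Qp l q j) = (starRingEnd ℂ) (Qp l q j) from rfl, ← h3]
  exact (eq_inv_of_mul_eq_one_right h1).symm

lemma sum_Qp (hq : IsPrimitiveRoot q (2*l+1)) (c : ZMod (2*l+1)) :
    ∑ x : ZMod (2*l+1), Qp l q (x * c) = if c = 0 then ((2*l+1 : ℕ) : ℂ) else 0 := by
  by_cases hc : c = 0
  · rw [if_pos hc]
    have : ∀ x : ZMod (2*l+1), Qp l q (x * c) = 1 := by
      intro x; rw [hc, mul_zero, Qp_zero]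
    simp [this, ZMod.card]
  · rw [if_neg hc]
    set ζ : ℂ := q ^ c.val with hζ
    have h1 : ∀ x : ZMod (2*l+1), Qp l q (x * c) = ζ ^ x.val := by
      intro x
      unfold Qp
      rw [ZMod.val_mul, qp_pow_mod hq, mul_comm, pow_mul]
    have hreidx : ∑ x : ZMod (2*l+1), ζ ^ x.val
        = ∑ i ∈ Finset.range (2*l+1), ζ ^ i := by
      refine Finset.sum_nbij' (fun x => x.val) (fun i => (i : ZMod (2*l+1)))
        ?_ ?_ ?_ ?_ ?_
      · intro a _; exact Finset.mem_range.mpr (ZMod.val_lt a)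
      · intro b _; exact Finset.mem_univ _
      · intro a _; exact ZMod.natCast_rightInverse a
      · intro b hb; exact ZMod.val_natCast_of_lt (Finset.mem_range.mp hb)
      · intro a _; rfl
    have hζ1 : ζ ≠ 1 := by
      have hvpos : 0 < c.val :=
        Nat.pos_of_ne_zero (fun h => hc ((ZMod.val_eq_zero c).mp h))
      exact hq.pow_ne_one_of_pos_of_lt hvpos.ne' (ZMod.val_lt c)
    have hζp : ζ ^ (2*l+1) = 1 := by
      rw [hζ, ← pow_mul, mul_comm, pow_mul, hq.pow_eq_one, one_pow]
    simp_rw [h1]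
    rw [hreidx, geom_sum_eq hζ1, hζp, sub_self, zero_div]

lemma two_mul_eq_zero_zmod {s : ZMod (2*l+1)} (h : 2 * s = 0) : s = 0 := by
  have h1 : ((2*l+1 : ℕ) : ZMod (2*l+1)) = 0 := ZMod.natCast_self _
  push_cast at h1
  have h2 : (2 : ZMod (2*l+1)) * ((l : ZMod (2*l+1)) + 1) = 1 := by
    linear_combination h1
  calc s = (2 * ((l : ZMod (2*l+1)) + 1)) * s := by rw [h2, one_mul]
    _ = ((l : ZMod (2*l+1)) + 1) * (2 * s) := by ring
    _ = 0 := by rw [h, mul_zero]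

open Fin.NatCast in
lemma parity_zero {N : ℕ} [NeZero N] (hN : Odd N) (m : Fin N → ZMod (2*l+1))
    (h : ∀ n, m n + m (n+1) = 0) : ∀ n, m n = 0 := by
  have key : ∀ j : ℕ, ∀ n : Fin N, m (n + (j : Fin N)) = (-1)^j * m n := by
    intro j
    induction j with
    | zero => intro n; simp
    | succ j ih =>
      intro n
      have hcast : ((j+1 : ℕ) : Fin N) = (j : Fin N) + 1 := by push_cast; ring
      rw [hcast, ← add_assoc]
      have h2 : m (n + (j:Fin N) + 1) = - m (n + (j:Fin N)) :=
        eq_neg_of_add_eq_zero_right (h (n + (j:Fin N)))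
      rw [h2, ih n]; ring
  intro n
  have hNc := key N n
  rw [Fin.natCast_self, add_zero, hN.neg_one_pow] at hNc
  exact two_mul_eq_zero_zmod (by linear_combination hNc)

end AuxSG

/-- **`Y_∞† Y_0` is the parity operator** (key identity in the proof of integrability):
for odd `N`, `Y_∞ᴴ · Y_0 = p^N · U_0` with `(U_0)_{k,k''} = ∏_n δ(k_n + k''_n ≡ 0 mod p)`. -/
theorem Yinf_dagger_Y0_is_parity (l N : ℕ) (hl : 1 ≤ l) [NeZero N] (hN : Odd N)
    (q : ℂ) (hq : IsPrimitiveRoot q (2*l+1)) :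
    (Yinfmat l q (N := N))ᴴ * Y0mat l q
      = ((2 * l + 1 : ℂ) ^ N) •
          Matrix.of (fun k k'' : Idx l N =>
            ∏ n : Fin N, if k n + k'' n = 0 then (1 : ℂ) else 0) := by
  classical
  ext k k''
  rw [Matrix.mul_apply]
  simp only [Matrix.smul_apply, Matrix.of_apply, smul_eq_mul, Matrix.conjTranspose_apply]
  set c : Fin N → ZMod (2*l+1) :=
    fun n => -(2 * ((k n + k'' n) + (k (n+1) + k'' (n+1)))) with hc
  have step1 : ∀ k' : Idx l N,
      star (Yinfmat l q (N := N) k' k) * Y0mat l q k' k''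
        = ∏ n : Fin N, Qp l q (k' n * c n) := by
    intro k'
    unfold Yinfmat Y0mat
    rw [star_prod, ← Finset.prod_mul_distrib]
    refine Finset.prod_congr rfl fun n _ => ?_
    rw [star_Qp hq, ← Qp_add hq]
    congr 1
    simp only [hc]
    ring
  calc (∑ k' : Idx l N, star (Yinfmat l q (N := N) k' k) * Y0mat l q k' k'')
      = ∑ k' : Idx l N, ∏ n : Fin N, Qp l q (k' n * c n) :=
        Finset.sum_congr rfl fun k' _ => step1 k'
    _ = ∏ n : Fin N, ∑ x : ZMod (2*l+1), Qp l q (x * c n) :=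
        (Fintype.prod_sum fun n x => Qp l q (x * c n)).symm
    _ = ∏ n : Fin N, (if c n = 0 then ((2*l+1 : ℕ) : ℂ) else 0) :=
        Finset.prod_congr rfl fun n _ => sum_Qp hq (c n)
    _ = (2 * (l:ℂ) + 1) ^ N * ∏ n : Fin N, (if k n + k'' n = 0 then (1:ℂ) else 0) := by
        by_cases hz : ∀ n : Fin N, k n + k'' n = 0
        · have hcz : ∀ n : Fin N, c n = 0 := by
            intro n; simp only [hc]; rw [hz n, hz (n+1)]; ring
          rw [Finset.prod_congr rfl fun n _ => if_pos (hcz n),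
            Finset.prod_congr rfl fun n _ => if_pos (hz n)]
          rw [Finset.prod_const, Finset.prod_const_one, mul_one,
            Finset.card_univ, Fintype.card_fin]
          push_cast
          ring
        · push_neg at hz
          obtain ⟨n0, hn0⟩ := hz
          have hcex : ∃ n1 : Fin N, c n1 ≠ 0 := by
            by_contra hall
            push_neg at hall
            apply hn0
            refine parity_zero hN (fun n => k n + k'' n) (fun n => ?_) n0
            have := hall n
            simp only [hc, neg_eq_zero] at this
            exact two_mul_eq_zero_zmod this
          obtain ⟨n1, hn1⟩ := hcex
          rw [Finset.prod_eq_zero (Finset.mem_univ n1)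
              (show (if c n1 = 0 then ((2*l+1 : ℕ) : ℂ) else 0) = 0 from if_neg hn1),
            Finset.prod_eq_zero (Finset.mem_univ n0)
              (show (if k n0 + k'' n0 = 0 then (1:ℂ) else 0) = 0 from if_neg hn0), mul_zero]
end
end

section
/- (Inversion relation for w_λ.) For every λ ∈ ℂ∖{0} with λ ∉ {−q^{2r−1} : r ∈ ℤ} and ±1/λ avoiding the same poles, and for every z ∈ S_p: w_λ(z)·w_{1/λ}(z) = χ_λ, where χ_λ = λ^{−l}·∏_{r=1}^{l} (λ+q^{2r−1})(1+λq^{2r−1})/(1+q^{2r−1})². In particular the product w_λ(z)·w_{1/λ}(z) does not depend on z ∈ S_p. -/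
open scoped BigOperators Matrix

noncomputable section

open SG
/-- **Inversion relation for `w_λ`**: `w_λ(z)·w_{1/λ}(z) = χ_λ`, independent of `z ∈ S_p`. -/
theorem w_inversion_relation (l : ℕ) (hl : 1 ≤ l)
    (q : ℂ) (hq : IsPrimitiveRoot q (2*l+1))
    (lam : ℂ) (hlam : lam ≠ 0) (h1 : Reg q lam) (h2 : Reg q lam⁻¹) :
    ∀ m : ZMod (2*l+1),
      w l q lam m * w l q lam⁻¹ m
        = (lam ^ l)⁻¹ * ∏ r ∈ Finset.range l,
            (lam + q ^ (2*r+1)) * (1 + lam * q ^ (2*r+1)) / (1 + q ^ (2*r+1)) ^ 2 := by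
  intro m
  have haux : ∀ r : ℕ, lam⁻¹ + q ^ (2*r+1) = lam⁻¹ * (1 + lam * q ^ (2*r+1)) := by
    intro r
    rw [mul_add, mul_one, ← mul_assoc, inv_mul_cancel₀ hlam, one_mul]
  have hterm1 : ∀ r : ℕ,
      (1 + lam * q ^ (2*r+1)) / (lam + q ^ (2*r+1)) *
        ((1 + lam⁻¹ * q ^ (2*r+1)) / (lam⁻¹ + q ^ (2*r+1))) = 1 := by
    intro r
    have ha := h1 r
    have hb := h2 r
    have h1a : 1 + lam * q ^ (2*r+1) ≠ 0 := by
      rw [show (1:ℂ) + lam * q ^ (2*r+1) = lam * (lam⁻¹ + q ^ (2*r+1)) from by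
        rw [mul_add, mul_inv_cancel₀ hlam]]
      exact mul_ne_zero hlam hb
    have e1 : 1 + lam⁻¹ * q ^ (2*r+1) = lam⁻¹ * (lam + q ^ (2*r+1)) := by
      rw [mul_add, inv_mul_cancel₀ hlam]
    rw [e1, haux r, div_mul_div_comm, div_eq_one_iff_eq
      (mul_ne_zero ha (mul_ne_zero (inv_ne_zero hlam) h1a))]
    ring
  have hterm2 : ∀ r : ℕ,
      (lam + q ^ (2*r+1)) / (1 + q ^ (2*r+1)) *
        ((lam⁻¹ + q ^ (2*r+1)) / (1 + q ^ (2*r+1)))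
      = lam⁻¹ * ((lam + q ^ (2*r+1)) * (1 + lam * q ^ (2*r+1)) / (1 + q ^ (2*r+1)) ^ 2) := by
    intro r
    rw [haux r, div_mul_div_comm, ← sq, mul_div_assoc']
    congr 1
    ring
  unfold w wAux
  rw [mul_mul_mul_comm, ← Finset.prod_mul_distrib, ← Finset.prod_mul_distrib,
      Finset.prod_congr rfl (fun r _ => hterm1 r), Finset.prod_const_one, one_mul,
      Finset.prod_congr rfl (fun r _ => hterm2 r), Finset.prod_mul_distrib,
      Finset.prod_const, Finset.card_range, ← inv_pow]
end
end
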